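/- arXiv:1706.01477 — 2 statements merged into one kernel-verified Lean document; each statement's English description precedes it below -/
import Mathlib

section
/- For x ∈ ℝ³, θ ∈ ℝ, λ ≠ 0, the map φ_x(ξ,y,z) defined by the explicit formula φ_x(ξ,y,z) = ( x1 - (1/λ)(e^{λy} sin(θ - λξ) - sin θ), x2 + (1/λ)(e^{λy} cos(θ - λξ) - cos θ), x3 + (1/(2λ²y))(e^{2λy} - 1)(-ξ + λz) + (1/λ²) e^{λy} sin(λξ) + (1/λ)( x1 (e^{λy} cos(θ - λξ) - cos θ) + x2 (e^{λy} sin(θ - λξ) - sin θ) ) ) has Jacobian determinant det dφ_x(ξ,y,z) = (1/(2λy)) e^{2λy} (e^{2λy} - 1), which is strictly positive for all (ξ,y,z) with y ≠ 0. -/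
open Real

/-- The coefficient `(e^{2λy}-1)/(2λ²y)`, interpreted by its continuous extension
`1/λ` at `y = 0`. -/
noncomputable def gcoef (lam y : ℝ) : ℝ :=
  if y = 0 then 1 / lam else (exp (2 * lam * y) - 1) / (2 * lam ^ 2 * y)

/-- The exponential-type parametrization `φ_x` of a neighborhood of a
Carnot–Carathéodory geodesic in the Heisenberg group, with base point `x`,
initial angle `θ` and curvature `λ`. -/
noncomputable def phiMap (x : ℝ × ℝ × ℝ) (θ lam : ℝ) (p : ℝ × ℝ × ℝ) : ℝ × ℝ × ℝ :=
  (x.1 - (1 / lam) * (exp (lam * p.2.1) * sin (θ - lam * p.1) - sin θ),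
   x.2.1 + (1 / lam) * (exp (lam * p.2.1) * cos (θ - lam * p.1) - cos θ),
   x.2.2 + gcoef lam p.2.1 * (-p.1 + lam * p.2.2)
     + (1 / lam ^ 2) * exp (lam * p.2.1) * sin (lam * p.1)
     + (1 / lam) * (x.1 * (exp (lam * p.2.1) * cos (θ - lam * p.1) - cos θ)
         + x.2.1 * (exp (lam * p.2.1) * sin (θ - lam * p.1) - sin θ)))

/-!
Only the third coordinate of `φ_x` depends on `z`, and it does so linearly with slope
`λ · gcoef λ y`, so expanding the Jacobian determinant along the `z`-column leaves
`λ · gcoef λ y` times the Jacobian of the planar part `(ξ, y) ↦ (φ₁, φ₂)`. In complex notation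
that planar part is `x₁ + i x₂ + (i / λ) e^{iθ} (e^{λ (y - iξ)} - 1)`, a holomorphic function
of `y - iξ` whose derivative has modulus `e^{λy}`, so its Jacobian is `e^{2λy}`. Positivity
holds because `e^t - 1` and `t` have the same sign.
-/

open Topology

section DetTriple

variable {R : Type*} [CommRing R]

def tripleEquivFinThree : (R × R × R) ≃ₗ[R] (Fin 3 → R) where
  toFun p := ![p.1, p.2.1, p.2.2]
  invFun f := (f 0, f 1, f 2)
  map_add' p q := by funext i; fin_cases i <;> simp
  map_smul' c p := by funext i; fin_cases i <;> simp
  left_inv p := by simp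
  right_inv f := by funext i; fin_cases i <;> simp

theorem LinearMap.det_triple (L : (R × R × R) →ₗ[R] R × R × R) :
    L.det =
      (L (1, 0, 0)).1 * (L (0, 1, 0)).2.1 * (L (0, 0, 1)).2.2
      - (L (1, 0, 0)).1 * (L (0, 0, 1)).2.1 * (L (0, 1, 0)).2.2
      - (L (0, 1, 0)).1 * (L (1, 0, 0)).2.1 * (L (0, 0, 1)).2.2
      + (L (0, 1, 0)).1 * (L (0, 0, 1)).2.1 * (L (1, 0, 0)).2.2
      + (L (0, 0, 1)).1 * (L (1, 0, 0)).2.1 * (L (0, 1, 0)).2.2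
      - (L (0, 0, 1)).1 * (L (0, 1, 0)).2.1 * (L (1, 0, 0)).2.2 := by
  rw [← LinearMap.det_conj L tripleEquivFinThree, ← LinearMap.det_toMatrix',
    Matrix.det_fin_three]
  simp [LinearMap.toMatrix'_apply, tripleEquivFinThree]

theorem LinearMap.det_triple_of_apply_zero_zero_one (L : (R × R × R) →ₗ[R] R × R × R) {c : R}
    (hL : L (0, 0, 1) = (0, 0, c)) :
    L.det = c * ((L (1, 0, 0)).1 * (L (0, 1, 0)).2.1 - (L (0, 1, 0)).1 * (L (1, 0, 0)).2.1) := by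
  rw [det_triple, hL]
  ring

end DetTriple

theorem Real.exp_sub_one_div_pos {t : ℝ} (ht : t ≠ 0) : 0 < (exp t - 1) / t := by
  rcases ht.lt_or_gt with h | h
  · exact div_pos_of_neg_of_neg (by linarith [exp_lt_one_iff.2 h]) h
  · exact div_pos (by linarith [add_one_lt_exp ht]) h

theorem gcoef_eventuallyEq {lam y : ℝ} (hy : y ≠ 0) :
    gcoef lam =ᶠ[𝓝 y] fun t => (exp (2 * lam * t) - 1) / (2 * lam ^ 2 * t) := by
  filter_upwards [isOpen_ne.mem_nhds hy] with t ht
  simp [gcoef, ht]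

theorem differentiableAt_gcoef {lam y : ℝ} (hlam : lam ≠ 0) (hy : y ≠ 0) :
    DifferentiableAt ℝ (gcoef lam) y :=
  (DifferentiableAt.div (by fun_prop) (by fun_prop) (by positivity)).congr_of_eventuallyEq
    (gcoef_eventuallyEq hy)

theorem differentiableAt_phiMap (x : ℝ × ℝ × ℝ) (θ : ℝ) {lam ξ y z : ℝ} (hlam : lam ≠ 0)
    (hy : y ≠ 0) : DifferentiableAt ℝ (phiMap x θ lam) (ξ, y, z) := by
  have hg := (differentiableAt_gcoef hlam hy).comp (ξ, y, z)
    (by fun_prop : DifferentiableAt ℝ (fun p : ℝ × ℝ × ℝ => p.2.1) (ξ, y, z))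
  unfold phiMap
  fun_prop

section Jacobian

variable {x : ℝ × ℝ × ℝ} {θ lam ξ y z : ℝ} {L : ℝ × ℝ × ℝ →L[ℝ] ℝ × ℝ × ℝ}

theorem apply_zero_zero_one_of_hasFDerivAt_phiMap (hL : HasFDerivAt (phiMap x θ lam) L (ξ, y, z)) :
    L (0, 0, 1) = (0, 0, lam * gcoef lam y) := by
  have hγ : HasDerivAt (fun t : ℝ => (ξ, y, t)) ((0 : ℝ), (0 : ℝ), (1 : ℝ)) z :=
    (hasDerivAt_const z ξ).prodMk ((hasDerivAt_const z y).prodMk (hasDerivAt_id z))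
  have hz := ((((hasDerivAt_id' z).const_mul lam).const_add (-ξ)).const_mul
    (gcoef lam y)).const_add x.2.2
  have h : HasDerivAt (fun t => phiMap x θ lam (ξ, y, t)) (0, 0, lam * gcoef lam y) z := by
    simp only [phiMap]
    exact ((hasDerivAt_const z _).prodMk ((hasDerivAt_const z _).prodMk
      ((hz.add_const _).add_const _))).congr_deriv (by simp [mul_comm])
  exact (hL.comp_hasDerivAt z hγ :).unique h

theorem apply_one_zero_zero_of_hasFDerivAt_phiMap (hlam : lam ≠ 0)
    (hL : HasFDerivAt (phiMap x θ lam) L (ξ, y, z)) :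
    (L (1, 0, 0)).1 = exp (lam * y) * cos (θ - lam * ξ) ∧
      (L (1, 0, 0)).2.1 = exp (lam * y) * sin (θ - lam * ξ) := by
  have hγ : HasDerivAt (fun t : ℝ => (t, y, z)) ((1 : ℝ), (0 : ℝ), (0 : ℝ)) ξ :=
    (hasDerivAt_id ξ).prodMk ((hasDerivAt_const ξ y).prodMk (hasDerivAt_const ξ z))
  have hangle := ((hasDerivAt_id' ξ).const_mul lam).const_sub θ
  have h1 : HasDerivAt (fun t => (phiMap x θ lam (t, y, z)).1)
      (exp (lam * y) * cos (θ - lam * ξ)) ξ := by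
    simp only [phiMap]
    exact ((((hangle.sin.const_mul _).sub_const _).const_mul _).const_sub _)
      |>.congr_deriv (by field_simp)
  have h2 : HasDerivAt (fun t => (phiMap x θ lam (t, y, z)).2.1)
      (exp (lam * y) * sin (θ - lam * ξ)) ξ := by
    simp only [phiMap]
    exact ((((hangle.cos.const_mul _).sub_const _).const_mul _).const_add _)
      |>.congr_deriv (by field_simp)
  exact ⟨(hL.fst.comp_hasDerivAt ξ hγ :).unique h1, (hL.snd.fst.comp_hasDerivAt ξ hγ :).unique h2⟩

theorem apply_zero_one_zero_of_hasFDerivAt_phiMap (hlam : lam ≠ 0)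
    (hL : HasFDerivAt (phiMap x θ lam) L (ξ, y, z)) :
    (L (0, 1, 0)).1 = -(exp (lam * y) * sin (θ - lam * ξ)) ∧
      (L (0, 1, 0)).2.1 = exp (lam * y) * cos (θ - lam * ξ) := by
  have hγ : HasDerivAt (fun t : ℝ => (ξ, t, z)) ((0 : ℝ), (1 : ℝ), (0 : ℝ)) y :=
    (hasDerivAt_const y ξ).prodMk ((hasDerivAt_id y).prodMk (hasDerivAt_const y z))
  have hexp := ((hasDerivAt_id' y).const_mul lam).exp
  have h1 : HasDerivAt (fun t => (phiMap x θ lam (ξ, t, z)).1)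
      (-(exp (lam * y) * sin (θ - lam * ξ))) y := by
    simp only [phiMap]
    exact ((((hexp.mul_const _).sub_const _).const_mul _).const_sub _)
      |>.congr_deriv (by field_simp)
  have h2 : HasDerivAt (fun t => (phiMap x θ lam (ξ, t, z)).2.1)
      (exp (lam * y) * cos (θ - lam * ξ)) y := by
    simp only [phiMap]
    exact ((((hexp.mul_const _).sub_const _).const_mul _).const_add _)
      |>.congr_deriv (by field_simp)
  exact ⟨(hL.fst.comp_hasDerivAt y hγ :).unique h1, (hL.snd.fst.comp_hasDerivAt y hγ :).unique h2⟩

end Jacobian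

/-- The Jacobian determinant of `φ_x` equals `(1/(2λy)) e^{2λy} (e^{2λy}-1)`, which
is strictly positive, for every `(ξ,y,z)` with `y ≠ 0`. -/
theorem phiMap_jacobian (x : ℝ × ℝ × ℝ) (θ lam : ℝ) (hlam : lam ≠ 0) :
    ∀ ξ y z : ℝ, y ≠ 0 →
      (fderiv ℝ (phiMap x θ lam) (ξ, y, z)).toLinearMap.det
          = (1 / (2 * lam * y)) * exp (2 * lam * y) * (exp (2 * lam * y) - 1) ∧
      0 < (1 / (2 * lam * y)) * exp (2 * lam * y) * (exp (2 * lam * y) - 1) := by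
  intro ξ y z hy
  have hL := (differentiableAt_phiMap x θ (z := z) (ξ := ξ) hlam hy).hasFDerivAt
  obtain ⟨h11, h21⟩ := apply_one_zero_zero_of_hasFDerivAt_phiMap hlam hL
  obtain ⟨h12, h22⟩ := apply_zero_one_zero_of_hasFDerivAt_phiMap hlam hL
  have hplanar : exp (lam * y) * cos (θ - lam * ξ) * (exp (lam * y) * cos (θ - lam * ξ))
      - -(exp (lam * y) * sin (θ - lam * ξ)) * (exp (lam * y) * sin (θ - lam * ξ))
      = exp (2 * lam * y) := by
    rw [show 2 * lam * y = lam * y + lam * y by ring, exp_add]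
    linear_combination exp (lam * y) ^ 2 * cos_sq_add_sin_sq (θ - lam * ξ)
  constructor
  · rw [LinearMap.det_triple_of_apply_zero_zero_one _
      (apply_zero_zero_one_of_hasFDerivAt_phiMap hL)]
    simp only [ContinuousLinearMap.coe_coe, h11, h21, h12, h22, hplanar, gcoef, if_neg hy]
    field_simp
  · calc (0 : ℝ) < exp (2 * lam * y) * ((exp (2 * lam * y) - 1) / (2 * lam * y)) :=
          mul_pos (exp_pos _) (exp_sub_one_div_pos (by positivity))
      _ = _ := by ring
end

section
/- Consider the first-order linear ODE system on ℝ² given by ċ₁ = (ξ cos θ - y sin θ) + λ(ξ(c₂ - x₂) + y(c₁ - x₁)), ċ₂ = (ξ sin θ + y cos θ) + λ(-ξ(c₁ - x₁) + y(c₂ - x₂)), with initial condition (c₁(0), c₂(0)) = (x₁, x₂), where ξ, y, θ, λ, x₁, x₂ are real constants with λ ≠ 0. Then the unique solution is c₁(t) = x₁ - (1/λ)(e^{λty} cos(λtξ) - 1) sin θ + (1/λ) e^{λty} sin(λtξ) cos θ and c₂(t) = x₂ + (1/λ) e^{λty} sin(λtξ) sin θ + (1/λ)(e^{λty} cos(λtξ)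 - 1) cos θ. Moreover, along this solution, (cos θ + λ(c₂ - x₂))² + (sin θ - λ(c₁ - x₁))² = e^{2λty}. -/
/-!
Put `u = i e^{iθ} + λ((c₁ - x₁) + i (c₂ - x₂))`. The system is equivalent to the scalar linear
equation `u' = λ (y - i ξ) u` with `u(0) = i e^{iθ}`, whose only solution is
`u(t) = i e^{iθ} e^{λ (y - i ξ) t}`. Real and imaginary parts give the explicit solution, and
`|u(t)|² = e^{2λty}` is the final identity.
-/

open Real

/-- Explicit first component of the solution of the projected geodesic flow ODE. -/
noncomputable def sol1 (x₁ θ lam ξ y : ℝ) (t : ℝ) : ℝ :=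
  x₁ - (1 / lam) * (exp (lam * t * y) * cos (lam * t * ξ) - 1) * sin θ
    + (1 / lam) * exp (lam * t * y) * sin (lam * t * ξ) * cos θ

/-- Explicit second component of the solution of the projected geodesic flow ODE. -/
noncomputable def sol2 (x₂ θ lam ξ y : ℝ) (t : ℝ) : ℝ :=
  x₂ + (1 / lam) * exp (lam * t * y) * sin (lam * t * ξ) * sin θ
    + (1 / lam) * (exp (lam * t * y) * cos (lam * t * ξ) - 1) * cos θ

theorem hasDerivAt_const_mul_iff {𝕜 : Type*} [NontriviallyNormedField 𝕜] {f : 𝕜 → 𝕜}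
    {a f' x : 𝕜} (ha : a ≠ 0) :
    HasDerivAt (fun s => a * f s) (a * f') x ↔ HasDerivAt f f' x :=
  ⟨fun h => by simpa [ha] using h.const_mul a⁻¹, fun h => h.const_mul a⟩

theorem hasDerivAt_complex_mk_iff {f g : ℝ → ℝ} {f' g' t : ℝ} :
    HasDerivAt (fun s => (⟨f s, g s⟩ : ℂ)) ⟨f', g'⟩ t ↔
      HasDerivAt f f' t ∧ HasDerivAt g g' t := by
  constructor
  · intro h
    exact ⟨Complex.reCLM.hasFDerivAt.comp_hasDerivAt t h,
      Complex.imCLM.hasFDerivAt.comp_hasDerivAt t h⟩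
  · rintro ⟨hf, hg⟩
    simpa only [Complex.mk_eq_add_mul_I] using
      hf.ofReal_comp.fun_add (hg.ofReal_comp.mul_const Complex.I)

theorem Complex.hasDerivAt_const_mul_exp_mul (u₀ k : ℂ) (t : ℝ) :
    HasDerivAt (fun s : ℝ => u₀ * exp (k * s)) (k * (u₀ * exp (k * t))) t := by
  simpa [mul_comm, mul_left_comm] using
    (((hasDerivAt_id (t : ℂ)).const_mul k).cexp.const_mul u₀).comp_ofReal

theorem Complex.eq_mul_exp_of_hasDerivAt_mul {u : ℝ → ℂ} {k : ℂ}
    (hu : ∀ t, HasDerivAt u (k * u t) t) (t : ℝ) : u t = u 0 * exp (k * t) := by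
  have hderiv : ∀ s : ℝ, HasDerivAt (fun s : ℝ => exp (-(k * s)) * u s) 0 s := by
    intro s
    have he : HasDerivAt (fun s : ℝ => exp (-(k * s))) (exp (-(k * s)) * -k) s := by
      simpa using ((hasDerivAt_id (s : ℂ)).const_mul k).neg.cexp.comp_ofReal
    exact (he.fun_mul (hu s)).congr_deriv (by ring)
  have hconst := is_const_of_deriv_eq_zero (fun s => (hderiv s).differentiableAt)
    (fun s => (hderiv s).deriv) t 0
  simp only [ofReal_zero, mul_zero, neg_zero, exp_zero, one_mul] at hconst
  rw [← hconst, mul_right_comm, ← exp_add]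
  simp

/-- The point `p` in the complex coordinate `i e^{iθ} + λ (p - x)`. -/
noncomputable def flowCoord (θ lam x₁ x₂ p₁ p₂ : ℝ) : ℂ :=
  ⟨-sin θ + lam * (p₁ - x₁), cos θ + lam * (p₂ - x₂)⟩

section flowCoord

variable {θ lam x₁ x₂ : ℝ}

theorem flowCoord_injective (hlam : lam ≠ 0) {p₁ p₂ q₁ q₂ : ℝ}
    (h : flowCoord θ lam x₁ x₂ p₁ p₂ = flowCoord θ lam x₁ x₂ q₁ q₂) : p₁ = q₁ ∧ p₂ = q₂ := by
  simpa only [flowCoord, Complex.mk.injEq, add_right_inj, mul_right_inj' hlam, sub_left_inj]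
    using h

theorem sq_norm_flowCoord (p₁ p₂ : ℝ) :
    ‖flowCoord θ lam x₁ x₂ p₁ p₂‖ ^ 2 =
      (cos θ + lam * (p₂ - x₂)) ^ 2 + (sin θ - lam * (p₁ - x₁)) ^ 2 := by
  rw [flowCoord, Complex.sq_norm, Complex.normSq_mk]
  ring

theorem hasDerivAt_flowCoord_iff (ξ y : ℝ) (hlam : lam ≠ 0) (c₁ c₂ : ℝ → ℝ) (t : ℝ) :
    HasDerivAt (fun s => flowCoord θ lam x₁ x₂ (c₁ s) (c₂ s))
        (lam * (y - ξ * Complex.I) * flowCoord θ lam x₁ x₂ (c₁ t) (c₂ t)) t ↔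
      HasDerivAt c₁ ((ξ * cos θ - y * sin θ) + lam * (ξ * (c₂ t - x₂) + y * (c₁ t - x₁))) t ∧
      HasDerivAt c₂ ((ξ * sin θ + y * cos θ) + lam * (-ξ * (c₁ t - x₁) + y * (c₂ t - x₂))) t := by
  have hrhs : lam * (y - ξ * Complex.I) * flowCoord θ lam x₁ x₂ (c₁ t) (c₂ t) =
      ⟨lam * ((ξ * cos θ - y * sin θ) + lam * (ξ * (c₂ t - x₂) + y * (c₁ t - x₁))),
        lam * ((ξ * sin θ + y * cos θ) + lam * (-ξ * (c₁ t - x₁) + y * (c₂ t - x₂)))⟩ := by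
    apply Complex.ext <;> simp [flowCoord] <;> ring
  rw [hrhs]
  simp only [flowCoord, hasDerivAt_complex_mk_iff, hasDerivAt_const_add_iff,
    hasDerivAt_const_mul_iff hlam, hasDerivAt_sub_const_iff]

theorem flowCoord_sol (ξ y : ℝ) (hlam : lam ≠ 0) (t : ℝ) :
    flowCoord θ lam x₁ x₂ (sol1 x₁ θ lam ξ y t) (sol2 x₂ θ lam ξ y t) =
      flowCoord θ lam x₁ x₂ x₁ x₂ * Complex.exp (lam * (y - ξ * Complex.I) * t) := by
  apply Complex.ext <;>
    simp [flowCoord, sol1, sol2, Complex.exp_re, Complex.exp_im] <;> field_simp <;> ring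

end flowCoord

/-- The first-order linear system
`ċ₁ = (ξ cos θ - y sin θ) + λ(ξ(c₂-x₂) + y(c₁-x₁))`,
`ċ₂ = (ξ sin θ + y cos θ) + λ(-ξ(c₁-x₁) + y(c₂-x₂))`, `(c₁(0),c₂(0)) = (x₁,x₂)`,
has the stated explicit functions as its unique solution; moreover along the solution
`(cos θ + λ(c₂-x₂))² + (sin θ - λ(c₁-x₁))² = e^{2λty}`. -/
theorem geodesic_flow_ode_solution (x₁ x₂ θ lam ξ y : ℝ) (hlam : lam ≠ 0) :
    (sol1 x₁ θ lam ξ y 0 = x₁ ∧ sol2 x₂ θ lam ξ y 0 = x₂ ∧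
      (∀ t : ℝ,
        HasDerivAt (sol1 x₁ θ lam ξ y)
          ((ξ * cos θ - y * sin θ)
            + lam * (ξ * (sol2 x₂ θ lam ξ y t - x₂) + y * (sol1 x₁ θ lam ξ y t - x₁))) t ∧
        HasDerivAt (sol2 x₂ θ lam ξ y)
          ((ξ * sin θ + y * cos θ)
            + lam * (-ξ * (sol1 x₁ θ lam ξ y t - x₁) + y * (sol2 x₂ θ lam ξ y t - x₂))) t)) ∧
    (∀ c₁ c₂ : ℝ → ℝ,
      c₁ 0 = x₁ → c₂ 0 = x₂ →
      (∀ t : ℝ,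
        HasDerivAt c₁
          ((ξ * cos θ - y * sin θ)
            + lam * (ξ * (c₂ t - x₂) + y * (c₁ t - x₁))) t ∧
        HasDerivAt c₂
          ((ξ * sin θ + y * cos θ)
            + lam * (-ξ * (c₁ t - x₁) + y * (c₂ t - x₂))) t) →
      ∀ t : ℝ, c₁ t = sol1 x₁ θ lam ξ y t ∧ c₂ t = sol2 x₂ θ lam ξ y t) ∧
    (∀ t : ℝ,
      (cos θ + lam * (sol2 x₂ θ lam ξ y t - x₂)) ^ 2
        + (sin θ - lam * (sol1 x₁ θ lam ξ y t - x₁)) ^ 2 = exp (2 * lam * t * y)) := by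
  have hsol := flowCoord_sol (θ := θ) (x₁ := x₁) (x₂ := x₂) ξ y hlam
  refine ⟨⟨by simp [sol1], by simp [sol2], fun t => ?_⟩, ?_, fun t => ?_⟩
  · rw [← hasDerivAt_flowCoord_iff ξ y hlam, funext hsol, hsol]
    exact Complex.hasDerivAt_const_mul_exp_mul _ _ t
  · intro c₁ c₂ h₁ h₂ hc t
    apply flowCoord_injective hlam
    rw [Complex.eq_mul_exp_of_hasDerivAt_mul
      (fun s => (hasDerivAt_flowCoord_iff ξ y hlam c₁ c₂ s).2 (hc s)) t, hsol, h₁, h₂]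
  · have hre : (lam * (y - ξ * Complex.I) * t : ℂ).re = lam * y * t := by simp
    rw [← sq_norm_flowCoord, hsol, norm_mul, mul_pow, sq_norm_flowCoord, Complex.norm_exp, hre,
      ← Real.exp_nat_mul]
    simp only [sub_self, mul_zero, add_zero, sub_zero, cos_sq_add_sin_sq, one_mul]
    ring_nf
end
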